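/- arXiv:2410.05360 — 3 statements merged into one kernel-verified Lean document; each statement's English description precedes it below -/
import Mathlib

section
/- Let g, D, P be real parameters and for k ∈ ℝ set ω(k) = √(|k|(g − P k² + D k⁴)). Suppose k₁, k₃ ∈ ℝ satisfy sgn(k₁) = sgn(k₃), set k₂ = −(k₁ + k₃), and assume g − P kⱼ² + D kⱼ⁴ ≥ 0 for j = 1, 2, 3. Then d₁₂₃ := (ω₁ + ω₂ + ω₃)(ω₁ + ω₂ − ω₃)(ω₁ − ω₂ + ω₃)(ω₁ − ω₂ − ω₃) satisfies d₁₂₃ = k₁ k₃ · d̃(k₁, k₃), where d̃(k₁, k₃) := k₁ k₃ (k₁ + k₃)² (3P − 5D(k₁² + k₁k₃ + k₃²))² − 4(g − P k₁² + D k₁⁴)(g − P k₃² + D k₃⁴). -/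
lemma sqrt_prod_four (a b c : ℝ) (ha : 0 ≤ a) (hb : 0 ≤ b) (hc : 0 ≤ c) :
    (Real.sqrt a + Real.sqrt b + Real.sqrt c) * (Real.sqrt a + Real.sqrt b - Real.sqrt c) *
      (Real.sqrt a - Real.sqrt b + Real.sqrt c) * (Real.sqrt a - Real.sqrt b - Real.sqrt c)
      = (a + b - c) ^ 2 - 4 * (a * b) := by
  have hx : Real.sqrt a ^ 2 = a := Real.sq_sqrt ha
  have hy : Real.sqrt b ^ 2 = b := Real.sq_sqrt hb
  have hz : Real.sqrt c ^ 2 = c := Real.sq_sqrt hc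
  have h : (Real.sqrt a + Real.sqrt b + Real.sqrt c) * (Real.sqrt a + Real.sqrt b - Real.sqrt c) *
      (Real.sqrt a - Real.sqrt b + Real.sqrt c) * (Real.sqrt a - Real.sqrt b - Real.sqrt c)
      = (Real.sqrt a ^ 2 + Real.sqrt b ^ 2 - Real.sqrt c ^ 2) ^ 2
        - 4 * (Real.sqrt a ^ 2 * Real.sqrt b ^ 2) := by ring
  rw [h, hx, hy, hz]

/-- Factorization of the three-wave resonance function `d₁₂₃ = k₁ k₃ d̃(k₁,k₃)`
for the hydroelastic dispersion relation `ω(k)² = |k|(g − P k² + D k⁴)`. -/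
theorem resonance_factorization (g D P : ℝ) (ω : ℝ → ℝ)
    (hω : ∀ k, ω k = Real.sqrt (|k| * (g - P * k ^ 2 + D * k ^ 4)))
    (k₁ k₂ k₃ : ℝ)
    (hsgn : Real.sign k₁ = Real.sign k₃)
    (hk₂ : k₂ = -(k₁ + k₃))
    (h1 : 0 ≤ g - P * k₁ ^ 2 + D * k₁ ^ 4)
    (h2 : 0 ≤ g - P * k₂ ^ 2 + D * k₂ ^ 4)
    (h3 : 0 ≤ g - P * k₃ ^ 2 + D * k₃ ^ 4) :
    (ω k₁ + ω k₂ + ω k₃) * (ω k₁ + ω k₂ - ω k₃) * (ω k₁ - ω k₂ + ω k₃) *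
        (ω k₁ - ω k₂ - ω k₃)
      = k₁ * k₃ *
        (k₁ * k₃ * (k₁ + k₃) ^ 2 * (3 * P - 5 * D * (k₁ ^ 2 + k₁ * k₃ + k₃ ^ 2)) ^ 2
          - 4 * (g - P * k₁ ^ 2 + D * k₁ ^ 4) * (g - P * k₃ ^ 2 + D * k₃ ^ 4)) := by
  subst hk₂
  rw [hω, hω, hω]
  -- sign cases
  have hcase : (0 ≤ k₁ ∧ 0 ≤ k₃) ∨ (k₁ ≤ 0 ∧ k₃ ≤ 0) := by
    rcases lt_trichotomy k₁ 0 with h | h | h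
    · right
      refine ⟨le_of_lt h, ?_⟩
      by_contra hk3
      push_neg at hk3
      rw [Real.sign_of_neg h, Real.sign_of_pos hk3] at hsgn
      norm_num at hsgn
    · left
      refine ⟨le_of_eq h.symm, ?_⟩
      by_contra hk3
      push_neg at hk3
      rw [h, Real.sign_zero, Real.sign_of_neg hk3] at hsgn
      norm_num at hsgn
    · left
      refine ⟨le_of_lt h, ?_⟩
      by_contra hk3
      push_neg at hk3
      rw [Real.sign_of_pos h, Real.sign_of_neg hk3] at hsgn
      norm_num at hsgn
  rcases hcase with ⟨hk1, hk3⟩ | ⟨hk1, hk3⟩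
  · have ha1 : |k₁| = k₁ := abs_of_nonneg hk1
    have ha3 : |k₃| = k₃ := abs_of_nonneg hk3
    have ha2 : |(-(k₁ + k₃))| = k₁ + k₃ := by
      rw [abs_neg]; exact abs_of_nonneg (by linarith)
    rw [ha1, ha2, ha3]
    rw [sqrt_prod_four _ _ _ (mul_nonneg hk1 h1) (mul_nonneg (by linarith) h2)
      (mul_nonneg hk3 h3)]
    ring
  · have ha1 : |k₁| = -k₁ := abs_of_nonpos hk1
    have ha3 : |k₃| = -k₃ := abs_of_nonpos hk3
    have ha2 : |(-(k₁ + k₃))| = -(k₁ + k₃) := abs_of_nonneg (by linarith)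
    rw [ha1, ha2, ha3]
    rw [sqrt_prod_four _ _ _ (mul_nonneg (by linarith) h1)
      (mul_nonneg (by linarith) h2) (mul_nonneg (by linarith) h3)]
    ring
end

section
/- Let g, D, P be real parameters and for k ∈ ℝ set σ(k) = |k|(g − P k² + D k⁴) (so σ(k) = ω(k)²). If k₁, k₃ ∈ ℝ satisfy k₁ k₃ ≥ 0 and k₂ = −(k₁ + k₃), then σ(k₁) + σ(k₃) − σ(k₂) = |k₂| k₁ k₃ (3P − 5D(k₁² + k₁k₃ + k₃²)). -/
/-- Key identity for `σ(k) = ω(k)² = |k|(g − P k² + D k⁴)` in the factorization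
of the three-wave resonance function. -/
theorem sigma_identity (g D P : ℝ) (σ : ℝ → ℝ)
    (hσ : ∀ k, σ k = |k| * (g - P * k ^ 2 + D * k ^ 4))
    (k₁ k₃ : ℝ) (h : 0 ≤ k₁ * k₃) (k₂ : ℝ) (hk₂ : k₂ = -(k₁ + k₃)) :
    σ k₁ + σ k₃ - σ k₂ = |k₂| * (k₁ * k₃) * (3 * P - 5 * D * (k₁ ^ 2 + k₁ * k₃ + k₃ ^ 2)) := by
  subst hk₂
  rw [hσ, hσ, hσ]
  rcases le_total 0 k₁ with h1 | h1 <;> rcases le_total 0 k₃ with h3 | h3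
  · rw [abs_of_nonneg h1, abs_of_nonneg h3,
      abs_of_nonpos (by linarith : -(k₁ + k₃) ≤ 0)]
    ring
  · have h0 : k₁ * k₃ = 0 :=
      le_antisymm (mul_nonpos_of_nonneg_of_nonpos h1 h3) h
    rcases mul_eq_zero.mp h0 with h0 | h0 <;> subst h0 <;> simp <;> ring
  · have h0 : k₁ * k₃ = 0 :=
      le_antisymm (mul_nonpos_of_nonpos_of_nonneg h1 h3) h
    rcases mul_eq_zero.mp h0 with h0 | h0 <;> subst h0 <;> simp <;> ring
  · rw [abs_of_nonpos h1, abs_of_nonpos h3,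
      abs_of_nonneg (by linarith : 0 ≤ -(k₁ + k₃))]
    ring
end

section
/- Let g > 0 and k₀ > 0, and set ω₀ = √(g k₀) and ω₂ = √(2 g k₀). Define c₁ˡ = k₀³ ω₀² / (4π ω₂ (2ω₀ + ω₂)), c₂ˡ = −k₀³ ω₀² / (4π ω₂ (2ω₀ − ω₂)), c₀ʳ = 3k₀²/(16π), c₁ʳ = (c₁ˡ/2)(3g/ω₀² + g/ω₂² − g/(ω₂(2ω₀ + ω₂)) − g/(ω₀(2ω₀ + ω₂))), and c₂ʳ = (c₂ˡ/2)(3g/ω₀² + g/ω₂² + g/(ω₂(2ω₀ − ω₂)) − g/(ω₀(2ω₀ − ω₂))). Then β := 8π (c₀ʳ − (c₁ʳ + c₂ʳ)/2) = 3 k₀². -/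
open Real

/-!
Write `a = ω₀`, `s = ω₂`. In the gravity limit `g k₀ = a²` and `s² = 2a²`, so `s (2a + s) = 2a (a + s)`
and the bracket in `c₁ʳ` collapses to `3g/a²`, giving `c₁ʳ = 3k₀²a / (16π(a + s))`. The coefficient
`c₂ʳ` is the same expression at the other root `-s` of `s² = 2a²`, and
`a/(a + s) + a/(a - s) = 2a²/(a² - s²) = -2`, so `c₁ʳ + c₂ʳ = -3k₀²/(8π) = -2c₀ʳ` and
`β = 8π · 2c₀ʳ = 3k₀²`.
-/

/-- The coefficients `c₁ʳ` (at `s = ω₂`) and `c₂ʳ` (at `s = -ω₂`), with `a = ω₀` and `k = k₀`. -/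
noncomputable def sidebandCoeff (g k a s : ℝ) : ℝ :=
  k ^ 3 * a ^ 2 / (4 * π * s * (2 * a + s)) / 2 *
    (3 * g / a ^ 2 + g / s ^ 2 - g / (s * (2 * a + s)) - g / (a * (2 * a + s)))

lemma sidebandCoeff_eq {g k a s : ℝ} (hgk : g * k = a ^ 2) (ha : a ≠ 0) (hs : s ^ 2 = 2 * a ^ 2)
    (has : a + s ≠ 0) : sidebandCoeff g k a s = 3 * k ^ 2 * a / (16 * π * (a + s)) := by
  have hs0 : s ≠ 0 := by
    rintro rfl
    exact ha (by nlinarith)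
  have hfactor : s * (2 * a + s) = 2 * a * (a + s) := by linear_combination hs
  have h2as : a * 2 + s ≠ 0 := by
    intro h
    exact mul_ne_zero (mul_ne_zero two_ne_zero ha) has (by rw [← hfactor]; linear_combination s * h)
  have hbracket : 3 * g / a ^ 2 + g / s ^ 2 - g / (s * (2 * a + s)) - g / (a * (2 * a + s))
      = 3 * g / a ^ 2 := by
    field_simp
    linear_combination (-(g * a)) * hs
  rw [sidebandCoeff, hbracket, mul_assoc (4 * π) s, hfactor]
  field_simp
  linear_combination 16 * k ^ 2 * hgk

lemma sidebandCoeff_add_neg {g k a s : ℝ} (hgk : g * k = a ^ 2) (ha : a ≠ 0)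
    (hs : s ^ 2 = 2 * a ^ 2) :
    sidebandCoeff g k a s + sidebandCoeff g k a (-s) = -(3 * k ^ 2 / (8 * π)) := by
  have hroots : (a + s) * (a - s) = -a ^ 2 := by linear_combination -hs
  obtain ⟨hplus, hminus⟩ : a + s ≠ 0 ∧ a - s ≠ 0 :=
    mul_ne_zero_iff.mp (by rw [hroots]; exact neg_ne_zero.mpr (pow_ne_zero 2 ha))
  rw [sidebandCoeff_eq hgk ha hs hplus, sidebandCoeff_eq hgk ha (by rw [neg_sq, hs]) hminus,
    ← sub_eq_add_neg]
  field_simp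
  linear_combination 16 * k ^ 2 * hroots

/-- In the gravity water-wave limit, the coefficient `β` of the Dysthe equation
reduces to `3k₀²`. -/
theorem beta_gravity_limit (g k₀ : ℝ) (hg : 0 < g) (hk₀ : 0 < k₀)
    (ω₀ ω₂ : ℝ) (hω₀ : ω₀ = Real.sqrt (g * k₀)) (hω₂ : ω₂ = Real.sqrt (2 * g * k₀))
    (c₁l c₂l c₀r c₁r c₂r : ℝ)
    (hc₁l : c₁l = k₀ ^ 3 * ω₀ ^ 2 / (4 * π * ω₂ * (2 * ω₀ + ω₂)))
    (hc₂l : c₂l = -(k₀ ^ 3 * ω₀ ^ 2) / (4 * π * ω₂ * (2 * ω₀ - ω₂)))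
    (hc₀r : c₀r = 3 * k₀ ^ 2 / (16 * π))
    (hc₁r : c₁r = (c₁l / 2) *
      (3 * g / ω₀ ^ 2 + g / ω₂ ^ 2 - g / (ω₂ * (2 * ω₀ + ω₂)) - g / (ω₀ * (2 * ω₀ + ω₂))))
    (hc₂r : c₂r = (c₂l / 2) *
      (3 * g / ω₀ ^ 2 + g / ω₂ ^ 2 + g / (ω₂ * (2 * ω₀ - ω₂)) - g / (ω₀ * (2 * ω₀ - ω₂)))) :
    8 * π * (c₀r - (c₁r + c₂r) / 2) = 3 * k₀ ^ 2 := by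
  have hgk : 0 < g * k₀ := mul_pos hg hk₀
  have hω₀sq : g * k₀ = ω₀ ^ 2 := by rw [hω₀, sq_sqrt hgk.le]
  have hω₂sq : ω₂ ^ 2 = 2 * ω₀ ^ 2 := by
    rw [hω₂, sq_sqrt (by positivity), ← hω₀sq, mul_assoc]
  have hc₁r' : c₁r = sidebandCoeff g k₀ ω₀ ω₂ := by rw [hc₁r, hc₁l, sidebandCoeff]
  have hc₂r' : c₂r = sidebandCoeff g k₀ ω₀ (-ω₂) := by
    simp only [hc₂r, hc₂l, sidebandCoeff, ← sub_eq_add_neg, neg_sq, mul_neg, neg_mul, div_neg,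
      neg_div, sub_neg_eq_add]
  have hsides := sidebandCoeff_add_neg hω₀sq (hω₀ ▸ (sqrt_pos.mpr hgk).ne') hω₂sq
  rw [hc₀r, hc₁r', hc₂r', hsides]
  field_simp
  ring
end
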